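/- Let N ≥ 2 be an integer that is not prime, and let p be a prime number dividing N. If p ∈ {67, 373, 397, 683, 947}, then N is monomially reducible. -/
import Mathlib


namespace Monomial

/-- The elementary matrix `[[a, -1], [1, 0]]` over `ZMod N`. -/
def mat {N : ℕ} (a : ZMod N) : Matrix (Fin 2) (Fin 2) (ZMod N) := !![a, -1; 1, 0]

/-- `M [a₁, …, aₙ] = mat aₙ * ⋯ * mat a₁`. -/
def M {N : ℕ} (l : List (ZMod N)) : Matrix (Fin 2) (Fin 2) (ZMod N) :=
  (l.reverse.map mat).prod

/-- A tuple is a solution of (E_N) if the associated matrix is `±Id`. -/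
def IsSolution {N : ℕ} (l : List (ZMod N)) : Prop := M l = 1 ∨ M l = -1

/-- The sum `(a₁,…,aₙ) ⊕ (b₁,…,bₘ) = (a₁+bₘ, a₂,…,aₙ₋₁, aₙ+b₁, b₂,…,bₘ₋₁)`. -/
def osum {N : ℕ} (u v : List (ZMod N)) : List (ZMod N) :=
  (u.headI + v.getLastD 0) ::
    ((u.drop 1).dropLast ++ (u.getLastD 0 + v.headI) :: (v.drop 1).dropLast)

/-- Equivalence: `v` is a cyclic permutation of `u` or of the reversal of `u`. -/
def CyclicEquiv {N : ℕ} (u v : List (ZMod N)) : Prop :=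
  (∃ i, v = u.rotate i) ∨ (∃ i, v = u.reverse.rotate i)

/-- A tuple is reducible if, up to equivalence, it is a sum of an `m`-tuple (`m ≥ 3`)
with a solution of size `l ≥ 3`. -/
def Reducible {N : ℕ} (c : List (ZMod N)) : Prop :=
  ∃ a b : List (ZMod N), 3 ≤ a.length ∧ 3 ≤ b.length ∧ IsSolution b ∧
    CyclicEquiv c (osum a b)

/-- An irreducible solution: a solution which is not reducible (and `(0,0)` is
not considered irreducible). -/
def IrreducibleSol {N : ℕ} (c : List (ZMod N)) : Prop :=
  IsSolution c ∧ ¬ Reducible c ∧ c ≠ [0, 0]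

/-- The size of the `k`-monomial minimal solution of (E_N): the least `n > 0` such
that the constant `n`-tuple `(k, …, k)` is a solution. -/
noncomputable def monomialMinimalSize (N : ℕ) (k : ZMod N) : ℕ :=
  sInf {n | 0 < n ∧ IsSolution (List.replicate n k)}

/-- `N` is monomially irreducible if, for every `k ≠ 0`, the `k`-monomial minimal
solution of (E_N) is irreducible. -/
def MonomiallyIrreducible (N : ℕ) : Prop :=
  ∀ k : ZMod N, k ≠ 0 → IrreducibleSol (List.replicate (monomialMinimalSize N k) k)

/-- The continuant `Kₙ(x, …, x)` at a constant tuple: `K₀ = 1`, `K₁ = x`,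
`Kₙ₊₂ = x * Kₙ₊₁ - Kₙ`. -/
def K {N : ℕ} (x : ZMod N) : ℕ → ZMod N
  | 0 => 1
  | 1 => x
  | n + 2 => x * K x (n + 1) - K x n

-- === auxiliary lemmas ===
variable {N : ℕ}

lemma M_append (u v : List (ZMod N)) : M (u ++ v) = M v * M u := by
  simp [M, List.reverse_append]

lemma M_cons (a : ZMod N) (l : List (ZMod N)) : M (a :: l) = M l * mat a := by
  have : (a :: l) = [a] ++ l := rfl
  rw [this, M_append]
  simp [M]

lemma M_replicate (n : ℕ) (k : ZMod N) : M (List.replicate n k) = (mat k) ^ n := by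
  induction n with
  | zero => simp [M]
  | succ n ih =>
    rw [List.replicate_succ, M_cons, ih, pow_succ]

lemma pow_mat (k : ZMod N) : ∀ n, (mat k) ^ (n + 2) =
    !![K k (n+2), -K k (n+1); K k (n+1), -K k n] := by
  intro n
  induction n with
  | zero =>
    show (mat k) ^ 2 = _
    rw [sq]
    simp only [mat, Matrix.mul_fin_two, K]
    congr 1 <;> ring
  | succ n ih =>
    rw [pow_succ, ih]
    show _ = !![K k (n+1+2), -K k (n+2); K k (n+2), -K k (n+1)]
    rw [show K k (n+1+2) = k * K k (n+2) - K k (n+1) from rfl,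
        show K k (n+2) = k * K k (n+1) - K k n from rfl]
    simp only [mat, Matrix.mul_fin_two]
    congr 1 <;> ring

lemma K_det (k : ZMod N) : ∀ n, K k (n+1) * K k (n+1) - K k (n+2) * K k n = 1 := by
  intro n
  induction n with
  | zero =>
    rw [show K k 2 = k * K k 1 - K k 0 from rfl]
    show K k 1 * K k 1 - (k * K k 1 - K k 0) * 1 = 1
    rw [show K k 1 = k from rfl, show K k 0 = 1 from rfl]; ring
  | succ n ih =>
    have h3 : K k (n+3) = k * K k (n+2) - K k (n+1) := rfl
    have h2 : K k (n+2) = k * K k (n+1) - K k n := rfl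
    show K k (n+2) * K k (n+2) - K k (n+3) * K k (n+1) = 1
    rw [h2] at ih
    rw [h3, h2]
    linear_combination ih

lemma M_b (k : ZMod N) (j : ℕ) (hK : K k (j+2) = -1) :
    M ((-K k (j+1)) :: (List.replicate (j+2) k ++ [-K k (j+1)])) = 1 := by
  set c : ZMod N := -K k (j+1) with hc
  rw [M_cons, M_append, M_replicate]
  have hs : M [c] = mat c := by simp [M]
  rw [hs, pow_mat]
  have hdet := K_det k j
  rw [hK] at hdet
  have hKj : K k j = 1 - K k (j+1) * K k (j+1) := by linear_combination hdet
  rw [hK, hKj, hc]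
  simp only [mat, Matrix.mul_fin_two]
  rw [show (1 : Matrix (Fin 2) (Fin 2) (ZMod N)) = !![1,0;0,1] from by
    rw [Matrix.one_fin_two]]
  congr 1 <;> ring

lemma osum_calc (x c : ZMod N) (q j : ℕ) :
    osum ((x - c) :: (List.replicate (q+1) x ++ [x - c]))
         (c :: (List.replicate (j+1) x ++ [c])) = List.replicate (q + j + 4) x := by
  simp only [osum, List.headI, List.drop_one, List.tail_cons, List.dropLast_concat,
    List.getLastD_cons, List.getLastD_concat]
  have hx : x - c + c = x := by ring
  rw [hx, show q + j + 4 = 1 + ((q+1) + (1 + (j+1))) by omega]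
  simp [List.replicate_add, List.replicate_succ, List.append_assoc]

lemma red (k : ZMod N) (j q : ℕ) (hK : K k (j+2) = -1) :
    Reducible (List.replicate (q + j + 5) k) := by
  set c : ZMod N := -K k (j+1) with hc
  refine ⟨(k - c) :: (List.replicate (q+1) k ++ [k - c]),
          c :: (List.replicate (j+2) k ++ [c]), ?_, ?_, Or.inl (M_b k j hK), ?_⟩
  · simp
  · simp
  · left
    refine ⟨0, ?_⟩
    rw [List.rotate_zero]
    have := osum_calc k c q (j+1)
    rw [show q + (j+1) + 4 = q + j + 5 by omega] at this
    rw [show (j+1)+1 = j+2 from rfl] at this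
    exact this

lemma K_hom {N' : ℕ} (f : ZMod N →+* ZMod N') (k : ZMod N) :
    ∀ n, f (K k n) = K (f k) n
  | 0 => by simp [K]
  | 1 => by simp [K]
  | (n+2) => by
      rw [show K k (n+2) = k * K k (n+1) - K k n from rfl,
          show K (f k) (n+2) = (f k) * K (f k) (n+1) - K (f k) n from rfl,
          map_sub, map_mul, K_hom f k (n+1), K_hom f k n]

lemma mat_map {N' : ℕ} (f : ZMod N →+* ZMod N') (k : ZMod N) :
    (mat k).map f = mat (f k) := by
  ext i j
  fin_cases i <;> fin_cases j <;> simp [mat, Matrix.map_apply]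

lemma sol_mod {N' : ℕ} (f : ZMod N →+* ZMod N') (k : ZMod N) (n : ℕ)
    (hs : (mat k) ^ n = 1 ∨ (mat k) ^ n = -1) :
    (mat (f k)) ^ n = 1 ∨ (mat (f k)) ^ n = -1 := by
  have hm : (mat (f k)) ^ n = f.mapMatrix ((mat k) ^ n) := by
    rw [map_pow, RingHom.mapMatrix_apply, mat_map]
  rcases hs with hs | hs
  · left; rw [hm, hs, map_one]
  · right; rw [hm, hs, map_neg, map_one]

lemma entry_zero {q : ℕ} (A : Matrix (Fin 2) (Fin 2) (ZMod q))
    (h : A = 1 ∨ A = -1) : A 1 0 = 0 := by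
  rcases h with h | h <;> rw [h] <;>
    simp [Matrix.one_apply, Matrix.neg_apply]

lemma three_dvd {m : ℕ} (hm : 2 ≤ m) (n : ℕ)
    (h : (mat (1 : ZMod m)) ^ n = 1 ∨ (mat (1 : ZMod m)) ^ n = -1) : 3 ∣ n := by
  haveI : Fact (1 < m) := ⟨hm⟩
  have h3 : (mat (1 : ZMod m)) ^ 3 = -1 := by
    rw [show (3 : ℕ) = 1 + 2 from rfl, pow_mat]
    have e2 : K (1 : ZMod m) 2 = 0 := by
      rw [show K (1 : ZMod m) 2 = 1 * K (1:ZMod m) 1 - K (1:ZMod m) 0 from rfl]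
      simp [K]
    have e3 : K (1 : ZMod m) 3 = -1 := by
      rw [show K (1 : ZMod m) 3 = 1 * K (1:ZMod m) 2 - K (1:ZMod m) 1 from rfl, e2]
      simp [K]
    rw [e2, e3, show K (1 : ZMod m) 1 = 1 from rfl]
    rw [show (-1 : Matrix (Fin 2) (Fin 2) (ZMod m)) = -(!![1,0;0,1]) from by
      rw [← Matrix.one_fin_two]]
    norm_num
  have hn : n = 3 * (n / 3) + n % 3 := (Nat.div_add_mod n 3).symm
  have hsplit : (mat (1 : ZMod m)) ^ n
      = (-1) ^ (n / 3) * (mat (1 : ZMod m)) ^ (n % 3) := by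
    conv_lhs => rw [hn]
    rw [pow_add, pow_mul, h3]
  have hsq : ((-1 : Matrix (Fin 2) (Fin 2) (ZMod m)) ^ (n / 3)) *
      ((-1) ^ (n / 3)) = 1 := by
    rw [← pow_add, ← two_mul, pow_mul, neg_one_sq, one_pow]
  have key : (mat (1 : ZMod m)) ^ (n % 3)
      = (-1) ^ (n / 3) * ((mat (1 : ZMod m)) ^ n) := by
    rw [hsplit, ← mul_assoc, hsq, one_mul]
  have hpm : (mat (1 : ZMod m)) ^ (n % 3) = 1 ∨
      (mat (1 : ZMod m)) ^ (n % 3) = -1 := by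
    rw [key]
    rcases Nat.even_or_odd (n / 3) with he | ho
    · rw [he.neg_one_pow, one_mul]; exact h
    · rw [ho.neg_one_pow, neg_one_mul]
      rcases h with h | h <;> rw [h]
      · right; rfl
      · left; exact neg_neg 1
  have hmod : n % 3 = 0 := by
    by_contra hne
    have h12 : n % 3 = 1 ∨ n % 3 = 2 := by omega
    rcases h12 with hh | hh <;> rw [hh] at hpm
    · rw [pow_one] at hpm
      have hz := entry_zero _ hpm
      simp [mat] at hz
    · rw [show (mat (1 : ZMod m)) ^ 2
          = !![K (1:ZMod m) 2, -K (1:ZMod m) 1; K (1:ZMod m) 1, -K (1:ZMod m) 0]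
          from pow_mat _ 0] at hpm
      have hz := entry_zero _ hpm
      rw [show K (1 : ZMod m) 1 = 1 from rfl] at hz
      simp at hz
  exact Nat.dvd_of_mod_eq_zero hmod

lemma eleven_dvd {p : ℕ} [Fact (1 < p)] (u : ZMod p) (n : ℕ)
    (h11 : (mat u) ^ 11 = 1)
    (h : (mat u) ^ n = 1 ∨ (mat u) ^ n = -1) : 11 ∣ n := by
  have hne : mat u ≠ 1 := by
    intro hc
    have : mat u 1 0 = 0 := by rw [hc]; simp [Matrix.one_apply]
    simp [mat] at this
  have hd : orderOf (mat u) ∣ 11 := orderOf_dvd_of_pow_eq_one h11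
  have h11p : Nat.Prime 11 := by norm_num
  rcases (h11p.eq_one_or_self_of_dvd _ hd) with hone | h11e
  · exact absurd (orderOf_eq_one_iff.mp hone) hne
  rcases h with h | h
  · have := orderOf_dvd_of_pow_eq_one h
    rwa [h11e] at this
  · have h2 : (mat u) ^ (n * 2) = 1 := by
      rw [pow_mul, h, neg_one_sq]
    have := orderOf_dvd_of_pow_eq_one h2
    rw [h11e] at this
    exact (Nat.Coprime.dvd_of_dvd_mul_right (by norm_num) this)

lemma exists_sol [NeZero N] (k : ZMod N) :
    ∃ n, 0 < n ∧ IsSolution (List.replicate n k) := by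
  have hinv : mat k * !![0, 1; -1, k] = 1 ∧ !![0, 1; -1, k] * mat k = 1 := by
    constructor <;>
      (rw [show (1 : Matrix (Fin 2) (Fin 2) (ZMod N)) = !![1,0;0,1] from
        Matrix.one_fin_two]
       simp only [mat, Matrix.mul_fin_two]
       congr 1 <;> ring)
  let U : (Matrix (Fin 2) (Fin 2) (ZMod N))ˣ := ⟨mat k, _, hinv.1, hinv.2⟩
  refine ⟨Fintype.card (Matrix (Fin 2) (Fin 2) (ZMod N))ˣ,
    Fintype.card_pos_iff.mpr ⟨1⟩, Or.inl ?_⟩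
  rw [M_replicate]
  have := pow_card_eq_one (G := (Matrix (Fin 2) (Fin 2) (ZMod N))ˣ) (x := U)
  calc (mat k) ^ Fintype.card (Matrix (Fin 2) (Fin 2) (ZMod N))ˣ
      = ((U ^ Fintype.card (Matrix (Fin 2) (Fin 2) (ZMod N))ˣ : _ˣ) :
          Matrix (Fin 2) (Fin 2) (ZMod N)) := by rw [Units.val_pow_eq_pow_val]
    _ = 1 := by rw [this]; rfl

lemma crt_eq {p m : ℕ} (hN : N = p * m) (hco : Nat.Coprime p m) [NeZero N]
    (hpd : p ∣ N) (hmd : m ∣ N) (z : ZMod N)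
    (hzp : ZMod.castHom hpd (ZMod p) z = 0)
    (hzm : ZMod.castHom hmd (ZMod m) z = 0) :
    z = 0 := by
  have hp : ((z.val : ℕ) : ZMod p) = 0 := by
    rwa [ZMod.natCast_val, ← ZMod.castHom_apply (h := hpd)]
  have hm : ((z.val : ℕ) : ZMod m) = 0 := by
    rwa [ZMod.natCast_val, ← ZMod.castHom_apply (h := hmd)]
  have hdp := (ZMod.natCast_eq_zero_iff _ _).mp hp
  have hdm := (ZMod.natCast_eq_zero_iff _ _).mp hm
  have hdN : N ∣ z.val := by
    exact dvd_trans (dvd_of_eq hN) (hco.mul_dvd_of_dvd_of_dvd hdp hdm)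
  rw [← ZMod.natCast_zmod_val z, (ZMod.natCast_eq_zero_iff _ _).mpr hdN]

lemma K_one_nine (m : ℕ) : K (1 : ZMod m) 9 = -1 := by
  have e0 : K (1 : ZMod m) 0 = 1 := rfl
  have e1 : K (1 : ZMod m) 1 = 1 := rfl
  have e2 : K (1 : ZMod m) 2 = 0 := by
    rw [show K (1:ZMod m) 2 = 1 * K (1:ZMod m) 1 - K (1:ZMod m) 0 from rfl, e1, e0]; ring
  have e3 : K (1 : ZMod m) 3 = -1 := by
    rw [show K (1:ZMod m) 3 = 1 * K (1:ZMod m) 2 - K (1:ZMod m) 1 from rfl, e2, e1]; ring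
  have e4 : K (1 : ZMod m) 4 = -1 := by
    rw [show K (1:ZMod m) 4 = 1 * K (1:ZMod m) 3 - K (1:ZMod m) 2 from rfl, e3, e2]; ring
  have e5 : K (1 : ZMod m) 5 = 0 := by
    rw [show K (1:ZMod m) 5 = 1 * K (1:ZMod m) 4 - K (1:ZMod m) 3 from rfl, e4, e3]; ring
  have e6 : K (1 : ZMod m) 6 = 1 := by
    rw [show K (1:ZMod m) 6 = 1 * K (1:ZMod m) 5 - K (1:ZMod m) 4 from rfl, e5, e4]; ring
  have e7 : K (1 : ZMod m) 7 = 1 := by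
    rw [show K (1:ZMod m) 7 = 1 * K (1:ZMod m) 6 - K (1:ZMod m) 5 from rfl, e6, e5]; ring
  have e8 : K (1 : ZMod m) 8 = 0 := by
    rw [show K (1:ZMod m) 8 = 1 * K (1:ZMod m) 7 - K (1:ZMod m) 6 from rfl, e7, e6]; ring
  rw [show K (1:ZMod m) 9 = 1 * K (1:ZMod m) 8 - K (1:ZMod m) 7 from rfl, e8, e7]; ring

lemma caseB {N p m : ℕ} (hN : 2 ≤ N) (hp : p.Prime) (hNm : N = p * m)
    (hm : 2 ≤ m) (hco : Nat.Coprime p m)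
    (u : ZMod p) (hu10 : K u 10 = 0) (hu11 : K u 11 = 1) (hu9 : K u 9 = -1) :
    ¬ MonomiallyIrreducible N := by
  haveI : NeZero N := ⟨by omega⟩
  haveI : Fact (1 < p) := ⟨hp.one_lt⟩
  haveI : Fact (1 < m) := ⟨hm⟩
  have hpd : p ∣ N := ⟨m, hNm⟩
  have hmd : m ∣ N := ⟨p, by rw [hNm, Nat.mul_comm]⟩
  obtain ⟨r, hrp, hrm⟩ := Nat.chineseRemainder hco u.val 1
  set k : ZMod N := (r : ZMod N) with hkdef
  have hkp : ZMod.castHom hpd (ZMod p) k = u := by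
    rw [hkdef, map_natCast, (ZMod.natCast_eq_natCast_iff _ _ _).mpr hrp,
      ZMod.natCast_zmod_val]
  have hkm : ZMod.castHom hmd (ZMod m) k = 1 := by
    rw [hkdef, map_natCast, (ZMod.natCast_eq_natCast_iff _ _ _).mpr hrm,
      Nat.cast_one]
  have hk0 : k ≠ 0 := by
    intro hc
    rw [hc, map_zero] at hkm
    exact one_ne_zero hkm.symm
  have hK9 : K k 9 = -1 := by
    have hz : K k 9 + 1 = 0 := by
      refine crt_eq hNm hco hpd hmd _ ?_ ?_
      · rw [map_add, map_one, K_hom, hkp, hu9, neg_add_cancel]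
      · rw [map_add, map_one, K_hom, hkm, K_one_nine, neg_add_cancel]
    linear_combination hz
  have h11 : (mat u) ^ 11 = 1 := by
    rw [show (11 : ℕ) = 9 + 2 from rfl, pow_mat]
    rw [show (9:ℕ) + 2 = 11 from rfl, show (9:ℕ) + 1 = 10 from rfl, hu10, hu11, hu9]
    rw [Matrix.one_fin_two]
    norm_num
  set S := {n | 0 < n ∧ IsSolution (List.replicate n k)} with hS
  have hne : S.Nonempty := exists_sol k
  have hmem := Nat.sInf_mem hne
  obtain ⟨hpos, hsol⟩ := hmem
  have hsol' : (mat k) ^ (sInf S) = 1 ∨ (mat k) ^ (sInf S) = -1 := by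
    simpa only [IsSolution, M_replicate] using hsol
  have h11d : 11 ∣ sInf S := by
    have := sol_mod (ZMod.castHom hpd (ZMod p)) k (sInf S) hsol'
    rw [hkp] at this
    exact eleven_dvd u _ h11 this
  have h3d : 3 ∣ sInf S := by
    have := sol_mod (ZMod.castHom hmd (ZMod m)) k (sInf S) hsol'
    rw [hkm] at this
    exact three_dvd hm _ this
  have h33 : 33 ≤ sInf S := by
    have : 33 ∣ sInf S := (Nat.Coprime.mul_dvd_of_dvd_of_dvd (by norm_num) h3d h11d)
    exact Nat.le_of_dvd hpos this
  have hred : Reducible (List.replicate (sInf S) k) := by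
    have := red k 7 (sInf S - 12) hK9
    rwa [show (sInf S - 12) + 7 + 5 = sInf S by omega] at this
  intro hMI
  obtain ⟨_, hnred, _⟩ := hMI k hk0
  exact hnred hred

lemma caseA {N p : ℕ} (hN : 2 ≤ N) (hp : p.Prime) (hp2 : p ≠ 2) (hp3 : p ≠ 3)
    (hsq : p * p ∣ N) : ¬ MonomiallyIrreducible N := by
  haveI : NeZero N := ⟨by omega⟩
  haveI : Fact (1 < N) := ⟨hN⟩
  obtain ⟨t, ht⟩ := hsq
  have hppos : 0 < p := hp.pos
  have htpos : 0 < t := by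
    rcases Nat.eq_zero_or_pos t with h0 | h0
    · rw [h0, Nat.mul_zero] at ht; omega
    · exact h0
  set k : ZMod N := ((p * t : ℕ) : ZMod N) with hkdef
  have hk0 : k ≠ 0 := by
    rw [hkdef, Ne, ZMod.natCast_eq_zero_iff]
    intro hdvd
    have hle := Nat.le_of_dvd (by positivity) hdvd
    have : p * t < N := by
      rw [ht]
      calc p * t < p * (p * t) := by
            have := hp.two_le
            nlinarith
        _ = p * p * t := by ring
    omega
  have hkk : k * k = 0 := by
    rw [hkdef, ← Nat.cast_mul, ZMod.natCast_eq_zero_iff, ht]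
    exact ⟨t, by ring⟩
  have hks : ∀ c : ℕ, ¬ p ∣ c → (c : ZMod N) * k ≠ 0 := by
    intro c hc
    rw [hkdef, ← Nat.cast_mul, Ne, ZMod.natCast_eq_zero_iff, ht]
    intro hdvd
    apply hc
    have h1 : p * (p * t) ∣ c * (p * t) := by
      rwa [show p * p * t = p * (p * t) by ring] at hdvd
    exact (Nat.mul_dvd_mul_iff_right (by positivity : 0 < p * t)).mp h1
  have e0 : K k 0 = 1 := rfl
  have e1 : K k 1 = k := rfl
  have e2 : K k 2 = -1 := by
    rw [show K k 2 = k * K k 1 - K k 0 from rfl, e1, e0, hkk]; ring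
  have e3 : K k 3 = -(k + k) := by
    rw [show K k 3 = k * K k 2 - K k 1 from rfl, e2, e1]; ring
  have e4 : K k 4 = 1 := by
    rw [show K k 4 = k * K k 3 - K k 2 from rfl, e3, e2]
    linear_combination (-2 : ZMod N) * hkk
  have e5 : K k 5 = k + k + k := by
    rw [show K k 5 = k * K k 4 - K k 3 from rfl, e4, e3]; ring
  set S := {n | 0 < n ∧ IsSolution (List.replicate n k)} with hS
  have hne : S.Nonempty := exists_sol k
  have hmem := Nat.sInf_mem hne
  obtain ⟨hpos, hsol⟩ := hmem
  have hsol' : (mat k) ^ (sInf S) = 1 ∨ (mat k) ^ (sInf S) = -1 := by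
    simpa only [IsSolution, M_replicate] using hsol
  have h7 : 7 ≤ sInf S := by
    by_contra hlt
    push_neg at hlt
    have hz : K k (sInf S - 1) = 0 ∨ sInf S = 1 := by
      rcases Nat.lt_or_ge (sInf S) 2 with h2 | h2
      · right; omega
      · left
        obtain ⟨n', hn'⟩ : ∃ n', sInf S = n' + 2 := ⟨sInf S - 2, by omega⟩
        rw [hn', pow_mat] at hsol'
        have := entry_zero _ hsol'
        rwa [show sInf S - 1 = n' + 1 by omega]
    rcases hz with hz | h1
    · have hrange : sInf S - 1 ≤ 5 ∧ 1 ≤ sInf S := ⟨by omega, hpos⟩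
      have : ∀ i, i ≤ 5 → K k i ≠ 0 := by
        intro i hi
        interval_cases i
        · rw [e0]; exact one_ne_zero
        · rw [e1]; exact hk0
        · rw [e2]; exact neg_ne_zero.mpr one_ne_zero
        · rw [e3]
          intro hc
          rw [neg_eq_zero] at hc
          refine hks 2 ?_ ?_
          · intro hd
            exact hp2 ((Nat.prime_dvd_prime_iff_eq hp (by norm_num)).mp hd)
          · rw [Nat.cast_two, two_mul]; exact hc
        · rw [e4]; exact one_ne_zero
        · rw [e5]
          intro hc
          refine hks 3 ?_ ?_
          · intro hd
            exact hp3 ((Nat.prime_dvd_prime_iff_eq hp (by norm_num)).mp hd)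
          · rw [show ((3:ℕ) : ZMod N) = 1 + 1 + 1 by norm_num,
              show (1 + 1 + 1 : ZMod N) * k = k + k + k by ring]
            exact hc
      exact this _ hrange.1 hz
    · rw [h1, pow_one] at hsol'
      have hz := entry_zero _ hsol'
      simp [mat] at hz
  have hred : Reducible (List.replicate (sInf S) k) := by
    have := red k 0 (sInf S - 5) e2
    rwa [show (sInf S - 5) + 0 + 5 = sInf S by omega] at this
  intro hMI
  obtain ⟨_, hnred, _⟩ := hMI k hk0
  exact hnred hred

lemma notMI (N p : ℕ) (hN : 2 ≤ N) (hnp : ¬ N.Prime) (hp : p.Prime)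
    (hdvd : p ∣ N) (hp2 : p ≠ 2) (hp3 : p ≠ 3)
    (u : ZMod p) (hu10 : K u 10 = 0) (hu11 : K u 11 = 1) (hu9 : K u 9 = -1) :
    ¬ MonomiallyIrreducible N := by
  by_cases hsq : p * p ∣ N
  · exact caseA hN hp hp2 hp3 hsq
  · obtain ⟨m, hNm⟩ := hdvd
    have hm2 : 2 ≤ m := by
      rcases Nat.lt_or_ge m 2 with hlt | hge
      · interval_cases m
        · omega
        · rw [Nat.mul_one] at hNm; exact absurd (hNm ▸ hp) hnp
      · exact hge
    have hco : Nat.Coprime p m := by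
      rw [Nat.Prime.coprime_iff_not_dvd hp]
      intro hdm
      exact hsq (hNm ▸ Nat.mul_dvd_mul_left p hdm)
    exact caseB hN hp hNm hm2 hco u hu10 hu11 hu9

set_option maxRecDepth 40000 in
theorem stmt10 (N p : ℕ) (hN : 2 ≤ N) (hnp : ¬ N.Prime) (hp : p.Prime)
    (hdvd : p ∣ N) (h : p ∈ ({67, 373, 397, 683, 947} : Set ℕ)) :
    ¬ MonomiallyIrreducible N := by
  simp only [Set.mem_insert_iff, Set.mem_singleton_iff] at h
  rcases h with rfl | rfl | rfl | rfl | rfl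
  · exact notMI N 67 hN hnp hp hdvd (by norm_num) (by norm_num)
      (17 : ZMod 67) (by decide) (by decide) (by decide)
  · exact notMI N 373 hN hnp hp hdvd (by norm_num) (by norm_num)
      (46 : ZMod 373) (by decide) (by decide) (by decide)
  · exact notMI N 397 hN hnp hp hdvd (by norm_num) (by norm_num)
      (95 : ZMod 397) (by decide) (by decide) (by decide)
  · exact notMI N 683 hN hnp hp hdvd (by norm_num) (by norm_num)
      (32 : ZMod 683) (by decide) (by decide) (by decide)
  · exact notMI N 947 hN hnp hp hdvd (by norm_num) (by norm_num)
      (129 : ZMod 947) (by decide) (by decide) (by decide)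

end Monomial
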